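/- For every k ≥ 1 and every universal co-Büchi k-register automaton A over the infinite data-domain D, every Boolean path of the product automaton A_B@V_k has either exactly one or infinitely many corresponding data-paths in A; in particular, it has at least one corresponding data-path. -/
import Mathlib


/-- A register word automaton over Boolean signals `P`, data-domain `D`, states `Q`,
and registers indexed by `R` (for a `k`-register automaton, `R = Fin k`).
The transition function reads a Boolean letter, an input-guard and an output-guard
(comparisons of the data-values of `i` resp. `o` with the registers) and yields
a set of (assignment, successor-state) pairs. -/
structure RegAutomaton (P D Q R : Type) where
  d0 : D
  q0 : Q
  F : Set Q
  tr : Q → (P → Bool) → (R → Bool) → (R → Bool) → Set ((R → Bool) × Q)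

/-- A data-path of a register automaton on the letter sequence `(l j, di j, dout j)`. -/
structure DataPath {P D Q R : Type} [DecidableEq D] (A : RegAutomaton P D Q R)
    (l : ℕ → P → Bool) (di dout : ℕ → D) where
  st : ℕ → Q
  regs : ℕ → R → D
  asgn : ℕ → R → Bool
  init_st : st 0 = A.q0
  init_regs : ∀ n, regs 0 n = A.d0
  step : ∀ j, (asgn j, st (j + 1)) ∈
    A.tr (st j) (l j) (fun n => decide (di j = regs j n)) (fun n => decide (dout j = regs j n))
  update : ∀ j n, regs (j + 1) n = if asgn j n then di j else regs j n

/-- The transition relation of the verifier `V_k`: its states are partitions of the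
register set (modelled as setoids); the guard letter must respect the current partition,
and the successor partition is determined by the assignment letter. -/
def VTrans {R : Type} (pa pa' : Setoid R) (gi go a : R → Bool) : Prop :=
  (∀ m n : R, pa.r m n → gi m = gi n ∧ go m = go n) ∧
  (∀ m n : R, ¬ pa.r m n → ¬(gi m = true ∧ gi n = true) ∧ ¬(go m = true ∧ go n = true)) ∧
  (∀ m n : R, pa'.r m n ↔
    ((a m = true ∧ a n = true) ∨ (a m = false ∧ a n = true ∧ gi m = true) ∨
     (a m = true ∧ a n = false ∧ gi n = true) ∨ (a m = false ∧ a n = false ∧ pa.r m n)))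

/-- A Boolean path of the product automaton `A_B @ V_k`: a path of the Boolean
associate of `A` together with the (deterministic) partition component of the
verifier, starting in the one-block partition `⊤`. -/
structure BoolPathV {P D Q R : Type} (A : RegAutomaton P D Q R) where
  st : ℕ → Q
  part : ℕ → Setoid R
  lP : ℕ → P → Bool
  gi : ℕ → R → Bool
  go : ℕ → R → Bool
  asgn : ℕ → R → Bool
  init_st : st 0 = A.q0
  init_part : part 0 = ⊤
  stepA : ∀ j, (asgn j, st (j + 1)) ∈ A.tr (st j) (lP j) (gi j) (go j)
  stepV : ∀ j, VTrans (part j) (part (j + 1)) (gi j) (go j) (asgn j)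

/-- A data-path of `A` corresponds to a Boolean path of `A_B @ V_k` iff, projecting away
the partition component, they visit the same states, carry the same `2^P`-letters, and at
every step the guard and assignment signals encode the guards and assignment of the
data-path. -/
def CorrespondsV {P D Q R : Type} [DecidableEq D] {A : RegAutomaton P D Q R}
    {l : ℕ → P → Bool} {di dout : ℕ → D}
    (dp : DataPath A l di dout) (bp : BoolPathV A) : Prop :=
  (∀ j, bp.st j = dp.st j) ∧ (∀ j, bp.lP j = l j) ∧
  (∀ j, bp.gi j = fun n => decide (di j = dp.regs j n)) ∧
  (∀ j, bp.go j = fun n => decide (dout j = dp.regs j n)) ∧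
  (∀ j, bp.asgn j = dp.asgn j)

/-- The set of data-paths of `A` (together with their data-letter sequences; the Boolean
letter sequence is forced by the correspondence) corresponding to a given Boolean path of
`A_B @ V_k`. -/
def CorrSetV {P D Q R : Type} [DecidableEq D] {A : RegAutomaton P D Q R}
    (bp : BoolPathV A) :
    Set (Σ' (di : ℕ → D) (dout : ℕ → D), DataPath A bp.lP di dout) :=
  {x | CorrespondsV x.2.2 bp}


noncomputable def freshD {D : Type} [Infinite D] (s : Finset D) : D :=
  (Infinite.exists_notMem_finset s).choose

lemma freshD_spec {D : Type} [Infinite D] (s : Finset D) : freshD s ∉ s :=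
  (Infinite.exists_notMem_finset s).choose_spec

noncomputable def pickVal {D : Type} [Infinite D] [DecidableEq D] {R : Type} [Fintype R] [DecidableEq R]
    (g : R → Bool) (cj : D) (rj : R → D) : D :=
  if h : ∃ n, g n = true then rj h.choose
  else if cj ∈ Finset.image rj Finset.univ then freshD (Finset.image rj Finset.univ) else cj

lemma pickVal_guard {D : Type} [Infinite D] [DecidableEq D] {R : Type} [Fintype R] [DecidableEq R]
    (pa : Setoid R) (g : R → Bool) (cj : D) (rj : R → D)
    (hinv : ∀ m n, pa.r m n ↔ rj m = rj n)
    (h1 : ∀ m n, pa.r m n → g m = g n)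
    (h2 : ∀ m n, ¬ pa.r m n → ¬(g m = true ∧ g n = true)) :
    ∀ n, g n = decide (pickVal g cj rj = rj n) := by
  intro n
  unfold pickVal
  split_ifs with h hc
  · have hg0 := h.choose_spec
    by_cases hn : g n = true
    · have hr : pa.r h.choose n := by
        by_contra hne
        exact h2 _ _ hne ⟨hg0, hn⟩
      have := (hinv _ _).1 hr
      simp [hn, this]
    · have hne : rj h.choose ≠ rj n := by
        intro he
        have := h1 _ _ ((hinv _ _).2 he)
        rw [hg0] at this
        exact hn this.symm
      simp [Bool.eq_false_iff.mp (Bool.not_eq_true _ ▸ hn), hne]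
  · have hf : freshD (Finset.image rj Finset.univ) ≠ rj n := by
      intro he
      exact freshD_spec _ (he ▸ Finset.mem_image_of_mem rj (Finset.mem_univ n))
    push_neg at h
    simp [h n, hf]
  · have hf : cj ≠ rj n := by
      intro he
      exact hc (he ▸ Finset.mem_image_of_mem rj (Finset.mem_univ n))
    push_neg at h
    simp [h n, hf]

variable {P D Q : Type} [Infinite D] [DecidableEq D] {k : ℕ}

noncomputable def cregs (A : RegAutomaton P D Q (Fin k)) (bp : BoolPathV A) (ci : ℕ → D) :
    ℕ → Fin k → D
  | 0 => fun _ => A.d0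
  | j + 1 => fun n =>
      if bp.asgn j n then pickVal (bp.gi j) (ci j) (cregs A bp ci j)
      else cregs A bp ci j n

noncomputable def cdi (A : RegAutomaton P D Q (Fin k)) (bp : BoolPathV A) (ci : ℕ → D) (j : ℕ) : D :=
  pickVal (bp.gi j) (ci j) (cregs A bp ci j)

noncomputable def cdout (A : RegAutomaton P D Q (Fin k)) (bp : BoolPathV A) (ci co : ℕ → D) (j : ℕ) : D :=
  pickVal (bp.go j) (co j) (cregs A bp ci j)

lemma cregs_inv (A : RegAutomaton P D Q (Fin k)) (bp : BoolPathV A) (ci : ℕ → D) :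
    ∀ j m n, (bp.part j).r m n ↔ cregs A bp ci j m = cregs A bp ci j n := by
  intro j
  induction j with
  | zero =>
    intro m n
    rw [bp.init_part]
    simp [cregs]
  | succ j ih =>
    intro m n
    obtain ⟨h1, h2, h3⟩ := bp.stepV j
    have hgi := pickVal_guard (bp.part j) (bp.gi j) (ci j) (cregs A bp ci j) ih
      (fun m n h => (h1 m n h).1) (fun m n h => (h2 m n h).1)
    rw [h3]
    have hm := hgi m
    have hn := hgi n
    show _ ↔ cregs A bp ci (j+1) m = cregs A bp ci (j+1) n
    simp only [cregs]
    cases ham : bp.asgn j m <;> cases han : bp.asgn j n <;>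
      simp [ham, han, hm, hn, ← ih m n, decide_eq_true_iff, eq_comm]

lemma cdi_guard (A : RegAutomaton P D Q (Fin k)) (bp : BoolPathV A) (ci : ℕ → D) (j : ℕ) :
    bp.gi j = fun n => decide (cdi A bp ci j = cregs A bp ci j n) := by
  obtain ⟨h1, h2, _⟩ := bp.stepV j
  funext n
  exact pickVal_guard (bp.part j) (bp.gi j) (ci j) (cregs A bp ci j) (cregs_inv A bp ci j)
    (fun m n h => (h1 m n h).1) (fun m n h => (h2 m n h).1) n

lemma cdout_guard (A : RegAutomaton P D Q (Fin k)) (bp : BoolPathV A) (ci co : ℕ → D) (j : ℕ) :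
    bp.go j = fun n => decide (cdout A bp ci co j = cregs A bp ci j n) := by
  obtain ⟨h1, h2, _⟩ := bp.stepV j
  funext n
  exact pickVal_guard (bp.part j) (bp.go j) (co j) (cregs A bp ci j) (cregs_inv A bp ci j)
    (fun m n h => (h1 m n h).2) (fun m n h => (h2 m n h).2) n

noncomputable def cpath (A : RegAutomaton P D Q (Fin k)) (bp : BoolPathV A) (ci co : ℕ → D) :
    DataPath A bp.lP (cdi A bp ci) (cdout A bp ci co) where
  st := bp.st
  regs := cregs A bp ci
  asgn := bp.asgn
  init_st := bp.init_st
  init_regs := fun _ => rfl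
  step := fun j => by
    rw [show (fun n => decide (cdi A bp ci j = cregs A bp ci j n)) = bp.gi j from
        (cdi_guard A bp ci j).symm,
      show (fun n => decide (cdout A bp ci co j = cregs A bp ci j n)) = bp.go j from
        (cdout_guard A bp ci co j).symm]
    exact bp.stepA j
  update := fun j n => rfl

lemma cpath_corr (A : RegAutomaton P D Q (Fin k)) (bp : BoolPathV A) (ci co : ℕ → D) :
    CorrespondsV (cpath A bp ci co) bp :=
  ⟨fun _ => rfl, fun _ => rfl, fun j => cdi_guard A bp ci j,
   fun j => cdout_guard A bp ci co j, fun _ => rfl⟩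

lemma cregs_congr (A : RegAutomaton P D Q (Fin k)) (bp : BoolPathV A) (ci ci' : ℕ → D) :
    ∀ j, (∀ i, i < j → ci i = ci' i) → cregs A bp ci j = cregs A bp ci' j := by
  intro j
  induction j with
  | zero => intro _; rfl
  | succ j ih =>
    intro h
    have h1 : cregs A bp ci j = cregs A bp ci' j := ih fun i hi => h i (hi.trans j.lt_succ_self)
    funext n
    simp only [cregs, h1, h j j.lt_succ_self]

lemma DataPath.ext' {P D Q R : Type} [DecidableEq D] {A : RegAutomaton P D Q R}
    {l : ℕ → P → Bool} {di dout : ℕ → D} {p q : DataPath A l di dout}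
    (h1 : p.st = q.st) (h2 : p.regs = q.regs) (h3 : p.asgn = q.asgn) : p = q := by
  cases p; cases q; cases h1; cases h2; cases h3; rfl

/-- for every `k ≥ 1` and universal co-Büchi `k`-register automaton `A`,
every Boolean path of `A_B @ V_k` has either exactly one or infinitely many corresponding
data-paths in `A`; in particular, it has at least one. -/
theorem stmt4 (D : Type) [Infinite D] [DecidableEq D] (P Q : Type) [Finite P] [Finite Q]
    (k : ℕ) (hk : 1 ≤ k) (A : RegAutomaton P D Q (Fin k)) (bp : BoolPathV A) :
    (CorrSetV bp).Nonempty ∧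
      ((∃! x, x ∈ CorrSetV bp) ∨ (CorrSetV bp).Infinite) := by
  classical
  set c0 : ℕ → D := fun _ => A.d0 with hc0
  have hmem : ∀ ci co : ℕ → D,
      (⟨cdi A bp ci, cdout A bp ci co, cpath A bp ci co⟩ :
        Σ' (di : ℕ → D) (dout : ℕ → D), DataPath A bp.lP di dout) ∈ CorrSetV bp :=
    fun ci co => cpath_corr A bp ci co
  refine ⟨⟨_, hmem c0 c0⟩, ?_⟩
  by_cases hS : ∃ j, (∀ n, bp.gi j n = false) ∨ (∀ n, bp.go j n = false)
  · -- infinitely many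
    right
    obtain ⟨j0, hj0⟩ := hS
    cases hj0 with
    | inl hgi =>
      set T : Set D := (↑(Finset.image (cregs A bp c0 j0) Finset.univ) : Set D)ᶜ with hT
      have hTinf : T.Infinite := Set.Finite.infinite_compl (Finset.finite_toSet _)
      haveI := hTinf.to_subtype
      apply Set.infinite_of_injective_forall_mem
        (f := fun d : T =>
          (⟨cdi A bp (Function.update c0 j0 d.1),
            cdout A bp (Function.update c0 j0 d.1) c0,
            cpath A bp (Function.update c0 j0 d.1) c0⟩ :
            Σ' (di : ℕ → D) (dout : ℕ → D), DataPath A bp.lP di dout))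
      · intro d1 d2 he
        have hdi : ∀ d : T, cdi A bp (Function.update c0 j0 d.1) j0 = d.1 := by
          intro d
          have hre : cregs A bp (Function.update c0 j0 d.1) j0 = cregs A bp c0 j0 :=
            cregs_congr A bp _ _ j0 fun i hi => Function.update_of_ne hi.ne _ _
          have hnex : ¬ ∃ n, bp.gi j0 n = true := by
            rintro ⟨n, hn⟩; rw [hgi n] at hn; exact Bool.false_ne_true hn
          have hd : d.1 ∉ Finset.image (cregs A bp c0 j0) Finset.univ := d.2
          simp [cdi, pickVal, hnex, hre, Function.update_self, hd]
        have h1 : cdi A bp (Function.update c0 j0 d1.1) j0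
            = cdi A bp (Function.update c0 j0 d2.1) j0 := by
          have := congrArg (fun x => x.1 j0) he
          simpa using this
        rw [hdi d1, hdi d2] at h1
        exact Subtype.ext h1
      · intro d; exact hmem _ _
    | inr hgo =>
      set T : Set D := (↑(Finset.image (cregs A bp c0 j0) Finset.univ) : Set D)ᶜ with hT
      have hTinf : T.Infinite := Set.Finite.infinite_compl (Finset.finite_toSet _)
      haveI := hTinf.to_subtype
      apply Set.infinite_of_injective_forall_mem
        (f := fun d : T =>
          (⟨cdi A bp c0, cdout A bp c0 (Function.update c0 j0 d.1),
            cpath A bp c0 (Function.update c0 j0 d.1)⟩ :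
            Σ' (di : ℕ → D) (dout : ℕ → D), DataPath A bp.lP di dout))
      · intro d1 d2 he
        have hdo : ∀ d : T, cdout A bp c0 (Function.update c0 j0 d.1) j0 = d.1 := by
          intro d
          have hnex : ¬ ∃ n, bp.go j0 n = true := by
            rintro ⟨n, hn⟩; rw [hgo n] at hn; exact Bool.false_ne_true hn
          have hd : d.1 ∉ Finset.image (cregs A bp c0 j0) Finset.univ := d.2
          simp [cdout, pickVal, hnex, Function.update_self, hd]
        have h1 : cdout A bp c0 (Function.update c0 j0 d1.1) j0
            = cdout A bp c0 (Function.update c0 j0 d2.1) j0 := by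
          have := congrArg (fun x => x.2.1 j0) he
          simpa using this
        rw [hdo d1, hdo d2] at h1
        exact Subtype.ext h1
      · intro d; exact hmem _ _
  · -- unique
    left
    push_neg at hS
    have hS' : ∀ j, (∃ n, bp.gi j n = true) ∧ (∃ n, bp.go j n = true) := by
      intro j
      obtain ⟨h1, h2⟩ := hS j
      obtain ⟨n1, hn1⟩ := h1
      obtain ⟨n2, hn2⟩ := h2
      exact ⟨⟨n1, Bool.not_eq_false _ ▸ hn1⟩, ⟨n2, Bool.not_eq_false _ ▸ hn2⟩⟩
    have key : ∀ x y, x ∈ CorrSetV bp → y ∈ CorrSetV bp → x = y := by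
      intro x y hx hy
      obtain ⟨hxs, hxl, hxgi, hxgo, hxa⟩ := hx
      obtain ⟨hys, hyl, hygi, hygo, hya⟩ := hy
      have hregs : ∀ j, x.2.2.regs j = y.2.2.regs j := by
        intro j
        induction j with
        | zero => funext n; rw [x.2.2.init_regs, y.2.2.init_regs]
        | succ j ih =>
          obtain ⟨n1, hn1⟩ := (hS' j).1
          have hxd : x.1 j = x.2.2.regs j n1 := by
            have := congrFun (hxgi j) n1
            rw [hn1] at this
            exact of_decide_eq_true this.symm
          have hyd : y.1 j = y.2.2.regs j n1 := by
            have := congrFun (hygi j) n1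
            rw [hn1] at this
            exact of_decide_eq_true this.symm
          have hdi : x.1 j = y.1 j := by rw [hxd, hyd, ih]
          funext n
          rw [x.2.2.update, y.2.2.update, ← hxa, ← hya, hdi, ih]
      have hdi : x.1 = y.1 := by
        funext j
        obtain ⟨n1, hn1⟩ := (hS' j).1
        have hxd : x.1 j = x.2.2.regs j n1 := by
          have := congrFun (hxgi j) n1
          rw [hn1] at this
          exact of_decide_eq_true this.symm
        have hyd : y.1 j = y.2.2.regs j n1 := by
          have := congrFun (hygi j) n1
          rw [hn1] at this
          exact of_decide_eq_true this.symm
        rw [hxd, hyd, hregs]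
      have hdo : x.2.1 = y.2.1 := by
        funext j
        obtain ⟨n1, hn1⟩ := (hS' j).2
        have hxd : x.2.1 j = x.2.2.regs j n1 := by
          have := congrFun (hxgo j) n1
          rw [hn1] at this
          exact of_decide_eq_true this.symm
        have hyd : y.2.1 j = y.2.2.regs j n1 := by
          have := congrFun (hygo j) n1
          rw [hn1] at this
          exact of_decide_eq_true this.symm
        rw [hxd, hyd, hregs]
      obtain ⟨xd, xo, xp⟩ := x
      obtain ⟨yd, yo, yp⟩ := y
      simp only at hdi hdo hregs hxs hys hxa hya
      subst hdi
      subst hdo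
      have : xp = yp := DataPath.ext'
        (by funext j; rw [← hxs j, ← hys j])
        (funext hregs)
        (by funext j; rw [← hxa j, ← hya j])
      rw [this]
    exact ⟨_, hmem c0 c0, fun y hy => key y _ hy (hmem c0 c0)⟩
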